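/- Let 1 < p < 2, set τ_p = 2/min{p, 3-p} ∈ (1,2], and for a fixed w̃ ∈ ℝ^d define B_p = min{(2(2‖w̃‖_p)^{2-p} + 2‖w̃‖_p^{p-1} + 2)^{-1}, (2(2‖w̃‖_p)^{2-p} + 2‖w̃‖_p^{p-1} + 2)^{-τ_p}} and the convex function Ω_p:[0,∞)→[0,∞) by Ω_p(u) = u + 1/τ_p - 1 for u ≥ 1 and Ω_p(u) = (1/τ_p)u^{τ_p} for 0 ≤ u < 1. Then for all w ∈ ℝ^d, ‖w̃ - w‖_p² ≥ B_p·Ω_p(D_{Ψ_p}(w̃, w)). Consequently, if F:ℝ^d→ℝ is Fréchet differentiable and σ_F-strongly convex with respect to ‖·‖_p with minimizer w*, then ⟨w*-w, ∇F(w*)-∇F(w)⟩ ≥ σ_F B_p Ω_p(D_{Ψ_p}(w*,w)) for all w ∈ ℝ^d (with B_p formed from w̃ = w*). -/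

import Mathlib

open MeasureTheory ProbabilityTheory Filter
open scoped RealInnerProductSpace

/-- The Bregman distance `D_g(a, b) = g(a) - g(b) - ⟨a - b, ∇g(b)⟩`. -/
noncomputable def bregman {E : Type*} [NormedAddCommGroup E] [NormedSpace ℝ E]
    (g : E → ℝ) (a b : E) : ℝ :=
  g a - g b - fderiv ℝ g b (a - b)

/-- The `p`-norm on `ℝ^d`. -/
noncomputable def pnorm {d : ℕ} (p : ℝ) (u : Fin d → ℝ) : ℝ :=
  (∑ i, |u i| ^ p) ^ (1 / p)

/-- The `p`-norm divergence `Ψ_p(w) = (1/2)‖w‖_p²`. -/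
noncomputable def pdiv {d : ℕ} (p : ℝ) (u : Fin d → ℝ) : ℝ :=
  1 / 2 * pnorm p u ^ 2

/-- `τ_p = 2 / min{p, 3-p}`. -/
noncomputable def taup (p : ℝ) : ℝ := 2 / min p (3 - p)

/-- The convex function `Ω_p`. -/
noncomputable def Omp (p : ℝ) (u : ℝ) : ℝ :=
  if 1 ≤ u then u + 1 / taup p - 1 else 1 / taup p * u ^ taup p

/-- The constant `B_p` depending on `‖w̃‖_p` and `p`. -/
noncomputable def Bp {d : ℕ} (p : ℝ) (wt : Fin d → ℝ) : ℝ :=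
  min ((2 * (2 * pnorm p wt) ^ (2 - p) + 2 * pnorm p wt ^ (p - 1) + 2) ^ (-1 : ℝ))
    ((2 * (2 * pnorm p wt) ^ (2 - p) + 2 * pnorm p wt ^ (p - 1) + 2) ^ (-taup p))

noncomputable def phi (p x : ℝ) : ℝ := x * |x| ^ (p - 2)

section scalars
variable {p : ℝ} (hp1 : 1 < p) (hp2 : p < 2)

lemma rpow_add_le_real {x y s : ℝ} (hx : 0 ≤ x) (hy : 0 ≤ y) (hs0 : 0 ≤ s) (hs1 : s ≤ 1) :
    (x + y) ^ s ≤ x ^ s + y ^ s := by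
  lift x to NNReal using hx
  lift y to NNReal using hy
  have := NNReal.rpow_add_le_add_rpow x y hs0 hs1
  exact_mod_cast this

lemma rpow_sub_le_real {x y s : ℝ} (hy : 0 ≤ y) (hxy : y ≤ x) (hs0 : 0 ≤ s) (hs1 : s ≤ 1) :
    x ^ s - y ^ s ≤ (x - y) ^ s := by
  have h := rpow_add_le_real (sub_nonneg.2 hxy) hy hs0 hs1
  rw [sub_add_cancel] at h
  linarith

include hp1 hp2

lemma phi_of_nonneg {x : ℝ} (hx : 0 ≤ x) : phi p x = x ^ (p - 1) := by
  rcases eq_or_lt_of_le hx with h | h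
  · simp [phi, ← h, Real.zero_rpow (by linarith : p - (1:ℝ) ≠ 0)]
  · rw [phi, abs_of_pos h]
    nth_rewrite 1 [show x = x ^ (1:ℝ) by rw [Real.rpow_one]]
    rw [← Real.rpow_add h]
    ring_nf

lemma phi_neg (x : ℝ) : phi p (-x) = - phi p x := by
  simp [phi, abs_neg, neg_mul]

lemma abs_phi (x : ℝ) : |phi p x| = |x| ^ (p - 1) := by
  rcases le_total 0 x with hx | hx
  · rw [phi_of_nonneg hp1 hp2 hx, abs_of_nonneg (Real.rpow_nonneg hx _), abs_of_nonneg hx]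
  · have := phi_of_nonneg hp1 hp2 (neg_nonneg.2 hx)
    rw [phi_neg hp1 hp2] at this
    have : phi p x = -((-x) ^ (p - 1)) := by linarith
    rw [this, abs_neg, abs_of_nonneg (Real.rpow_nonneg (by linarith) _), abs_of_nonpos hx]

lemma phi_mul_self (x : ℝ) : phi p x * x = |x| ^ p := by
  rcases eq_or_ne x 0 with rfl | h
  · simp [phi, Real.zero_rpow (by linarith : p ≠ (0:ℝ))]
  · have hx : 0 < |x| := abs_pos.2 h
    have : phi p x * x = |x| ^ (2:ℝ) * |x| ^ (p - 2) := by
      rw [phi]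
      have h2 : |x| ^ (2:ℝ) = x * x := by
        rw [show (2:ℝ) = ((2:ℕ):ℝ) by norm_num, Real.rpow_natCast, sq_abs, sq]
      rw [h2]; ring
    rw [this, ← Real.rpow_add hx]
    ring_nf

lemma phi_sub_le {x y : ℝ} (hxy : y ≤ x) : phi p x - phi p y ≤ 2 * (x - y) ^ (p - 1) := by
  have hs0 : (0:ℝ) ≤ p - 1 := by linarith
  have hs1 : p - 1 ≤ 1 := by linarith
  rcases le_total 0 y with hy | hy
  · rw [phi_of_nonneg hp1 hp2 hy, phi_of_nonneg hp1 hp2 (hy.trans hxy)]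
    have := rpow_sub_le_real hy hxy hs0 hs1
    have h2 : (0:ℝ) ≤ (x - y) ^ (p - 1) := Real.rpow_nonneg (by linarith) _
    linarith
  · rcases le_total x 0 with hx | hx
    · have e1 : phi p x = -((-x) ^ (p - 1)) := by
        have := phi_of_nonneg hp1 hp2 (neg_nonneg.2 hx)
        rw [phi_neg hp1 hp2] at this; linarith
      have e2 : phi p y = -((-y) ^ (p - 1)) := by
        have := phi_of_nonneg hp1 hp2 (neg_nonneg.2 hy)
        rw [phi_neg hp1 hp2] at this; linarith
      rw [e1, e2]
      have := rpow_sub_le_real (neg_nonneg.2 hx) (by linarith : -x ≤ -y) hs0 hs1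
      have h2 : (0:ℝ) ≤ (x - y) ^ (p - 1) := Real.rpow_nonneg (by linarith) _
      have h3 : -y - -x = x - y := by ring
      rw [h3] at this
      linarith
    · rw [phi_of_nonneg hp1 hp2 hx]
      have e2 : phi p y = -((-y) ^ (p - 1)) := by
        have := phi_of_nonneg hp1 hp2 (neg_nonneg.2 hy)
        rw [phi_neg hp1 hp2] at this; linarith
      rw [e2]
      have b1 : x ^ (p-1) ≤ (x - y) ^ (p-1) := Real.rpow_le_rpow hx (by linarith) hs0
      have b2 : (-y) ^ (p-1) ≤ (x - y) ^ (p-1) :=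
        Real.rpow_le_rpow (by linarith) (by linarith) hs0
      linarith

lemma phi_mono {x y : ℝ} (hxy : y ≤ x) : phi p y ≤ phi p x := by
  rcases le_total 0 y with hy | hy
  · rw [phi_of_nonneg hp1 hp2 hy, phi_of_nonneg hp1 hp2 (hy.trans hxy)]
    exact Real.rpow_le_rpow hy hxy (by linarith)
  · have e2 : phi p y = -((-y) ^ (p - 1)) := by
      have := phi_of_nonneg hp1 hp2 (neg_nonneg.2 hy)
      rw [phi_neg hp1 hp2] at this; linarith
    rcases le_total x 0 with hx | hx
    · have e1 : phi p x = -((-x) ^ (p - 1)) := by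
        have := phi_of_nonneg hp1 hp2 (neg_nonneg.2 hx)
        rw [phi_neg hp1 hp2] at this; linarith
      rw [e1, e2, neg_le_neg_iff]
      exact Real.rpow_le_rpow (by linarith) (by linarith) (by linarith)
    · rw [e2, phi_of_nonneg hp1 hp2 hx]
      have : (0:ℝ) ≤ x ^ (p-1) := Real.rpow_nonneg hx _
      have : (0:ℝ) ≤ (-y) ^ (p-1) := Real.rpow_nonneg (by linarith) _
      linarith

lemma abs_phi_sub_le (x y : ℝ) : |phi p x - phi p y| ≤ 2 * |x - y| ^ (p - 1) := by
  rcases le_total y x with h | h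
  · rw [abs_of_nonneg (by linarith : 0 ≤ x - y),
      abs_of_nonneg (sub_nonneg.2 (phi_mono hp1 hp2 h))]
    exact phi_sub_le hp1 hp2 h
  · rw [show x - y = -(y - x) by ring, abs_neg,
      show phi p x - phi p y = -(phi p y - phi p x) by ring, abs_neg,
      abs_of_nonneg (by linarith : 0 ≤ y - x),
      abs_of_nonneg (sub_nonneg.2 (phi_mono hp1 hp2 h))]
    exact phi_sub_le hp1 hp2 h

end scalars

section pnormsec
variable {d : ℕ} {p : ℝ} (hp1 : 1 < p) (hp2 : p < 2)

lemma sum_abs_rpow_nonneg (u : Fin d → ℝ) : 0 ≤ ∑ i, |u i| ^ p :=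
  Finset.sum_nonneg fun i _ => Real.rpow_nonneg (abs_nonneg _) _

lemma pnorm_nonneg (u : Fin d → ℝ) : 0 ≤ pnorm p u :=
  Real.rpow_nonneg (sum_abs_rpow_nonneg u) _

include hp1

lemma pnorm_rpow (u : Fin d → ℝ) : pnorm p u ^ p = ∑ i, |u i| ^ p := by
  rw [pnorm, ← Real.rpow_mul (sum_abs_rpow_nonneg u), one_div,
    inv_mul_cancel₀ (by linarith : p ≠ 0), Real.rpow_one]

lemma pnorm_neg (u : Fin d → ℝ) : pnorm p (-u) = pnorm p u := by
  simp [pnorm]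

lemma pnorm_add_le (a b : Fin d → ℝ) : pnorm p (a + b) ≤ pnorm p a + pnorm p b := by
  simpa [pnorm] using Real.Lp_add_le Finset.univ a b hp1.le

lemma abs_pnorm_sub_pnorm_le (a b : Fin d → ℝ) :
    |pnorm p a - pnorm p b| ≤ pnorm p (a - b) := by
  rw [abs_le]
  constructor
  · have h := pnorm_add_le hp1 b (a - b)
    rw [show b + (a - b) = a by ring] at h
    have h2 : pnorm p (a - b) = pnorm p (b - a) := by
      rw [show b - a = -(a - b) by ring, pnorm_neg hp1]
    have h3 := pnorm_add_le hp1 a (b - a)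
    rw [show a + (b - a) = b by ring] at h3
    linarith
  · have h := pnorm_add_le hp1 b (a - b)
    rw [show b + (a - b) = a by ring] at h
    linarith

end pnormsec

section deriv
variable {p : ℝ} (hp1 : 1 < p) (hp2 : p < 2)
include hp1 hp2

lemma hasDerivAt_abs_rpow' (x : ℝ) :
    HasDerivAt (fun x : ℝ => |x| ^ p) (p * phi p x) x := by
  have h := hasDerivAt_abs_rpow x hp1
  convert h using 1
  rw [phi]; ring

end deriv

section fder
variable {d : ℕ} {p : ℝ}

noncomputable def Dmap (p : ℝ) (u : Fin d → ℝ) : (Fin d → ℝ) →L[ℝ] ℝ :=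
  (pnorm p u ^ (2 - p)) • ∑ i, (phi p (u i)) • (ContinuousLinearMap.proj i :
    (Fin d → ℝ) →L[ℝ] ℝ)

variable (hp1 : 1 < p) (hp2 : p < 2)
include hp1 hp2

lemma hasFDerivAt_pdiv (u : Fin d → ℝ) : HasFDerivAt (pdiv p) (Dmap p u) u := by
  have hp0 : (0:ℝ) < p := by linarith
  set S : (Fin d → ℝ) → ℝ := fun v => ∑ i, |v i| ^ p with hS
  have hSu : S u = ∑ i, |u i| ^ p := rfl
  have hSderiv : HasFDerivAt S
      (∑ i, (p * phi p (u i)) • (ContinuousLinearMap.proj i : (Fin d → ℝ) →L[ℝ] ℝ)) u := by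
    apply HasFDerivAt.fun_sum
    intro i _
    exact (hasDerivAt_abs_rpow' hp1 hp2 (u i)).comp_hasFDerivAt u
      ((ContinuousLinearMap.proj i : (Fin d → ℝ) →L[ℝ] ℝ).hasFDerivAt)
  have houter : HasDerivAt (fun t : ℝ => t ^ (2 / p)) ((2 / p) * (S u) ^ (2 / p - 1)) (S u) :=
    Real.hasDerivAt_rpow_const (Or.inr (by rw [le_div_iff₀ hp0]; linarith))
  have hcomp := (houter.comp_hasFDerivAt u hSderiv).const_mul (1/2 : ℝ)
  have hfun : pdiv p = fun v => 1/2 * (S v) ^ (2 / p) := by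
    funext v
    have hSv : S v = ∑ i, |v i| ^ p := rfl
    rw [pdiv, pnorm, hSv,
      ← Real.rpow_natCast ((∑ i, |v i| ^ p) ^ (1/p : ℝ)) 2,
      ← Real.rpow_mul (sum_abs_rpow_nonneg v)]
    norm_num
    congr 1
    ring
  rw [hfun]
  refine hcomp.congr_fderiv (Eq.symm ?_)
  ext h
  simp only [Dmap, ContinuousLinearMap.smul_apply, ContinuousLinearMap.sum_apply,
    ContinuousLinearMap.proj_apply, smul_eq_mul, Finset.mul_sum]
  apply Finset.sum_congr rfl
  intro i _
  have hkey : pnorm p u ^ (2 - p) = (S u) ^ (2 / p - 1) := by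
    rw [pnorm, ← hSu, ← Real.rpow_mul (hSu ▸ sum_abs_rpow_nonneg u)]
    congr 1
    field_simp
  rw [hkey]
  field_simp

lemma fderiv_pdiv (u : Fin d → ℝ) : fderiv ℝ (pdiv p) u = Dmap p u :=
  (hasFDerivAt_pdiv hp1 hp2 u).fderiv

lemma bregman_pdiv (a b : Fin d → ℝ) :
    bregman (pdiv p) a b =
      pdiv p a - pdiv p b - pnorm p b ^ (2 - p) * ∑ i, phi p (b i) * (a i - b i) := by
  rw [bregman, fderiv_pdiv hp1 hp2]
  simp only [Dmap, ContinuousLinearMap.smul_apply, ContinuousLinearMap.sum_apply,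
    ContinuousLinearMap.proj_apply, smul_eq_mul, Pi.sub_apply, Finset.mul_sum]

end fder

section ineq
variable {d : ℕ} {p : ℝ} (hp1 : 1 < p) (hp2 : p < 2)

lemma abs_rpow_sub_le {a b s : ℝ} (ha : 0 ≤ a) (hb : 0 ≤ b) (hs0 : 0 ≤ s) (hs1 : s ≤ 1) :
    |a ^ s - b ^ s| ≤ |a - b| ^ s := by
  rcases le_total b a with h | h
  · rw [abs_of_nonneg (sub_nonneg.2 (Real.rpow_le_rpow hb h hs0)),
      abs_of_nonneg (sub_nonneg.2 h)]
    exact rpow_sub_le_real hb h hs0 hs1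
  · rw [abs_sub_comm, abs_sub_comm a b,
      abs_of_nonneg (sub_nonneg.2 (Real.rpow_le_rpow ha h hs0)),
      abs_of_nonneg (sub_nonneg.2 h)]
    exact rpow_sub_le_real ha h hs0 hs1

include hp1 hp2

lemma holder_phi (x h : Fin d → ℝ) :
    ∑ i, phi p (x i) * h i ≤ pnorm p x ^ (p - 1) * pnorm p h := by
  have hp0 : (0:ℝ) < p := by linarith
  have hpm : p - 1 ≠ 0 := by linarith
  have hq : ((p / (p - 1)).HolderConjugate p) := by
    refine Real.HolderTriple.symm ?_
    exact (Real.holderConjugate_iff_eq_conjExponent hp1).2 rfl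
  have H := Real.inner_le_Lp_mul_Lq (s := Finset.univ)
    (f := fun i => phi p (x i)) (g := h) hq
  have e1 : ∀ i : Fin d, |phi p (x i)| ^ (p / (p - 1)) = |x i| ^ p := by
    intro i
    rw [abs_phi hp1 hp2, ← Real.rpow_mul (abs_nonneg _)]
    congr 1
    field_simp
  have e2 : (∑ i, |phi p (x i)| ^ (p / (p - 1))) ^ (1 / (p / (p - 1)))
      = pnorm p x ^ (p - 1) := by
    simp_rw [e1]
    rw [pnorm, ← Real.rpow_mul (sum_abs_rpow_nonneg x), one_div_div]
    congr 1
    field_simp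
  rw [e2] at H
  exact H

lemma pnorm_eq_zero {b : Fin d → ℝ} (hb : pnorm p b = 0) : ∀ i, b i = 0 := by
  intro i
  have h1 : (∑ j, |b j| ^ p) = 0 := by
    have := pnorm_rpow hp1 b
    rw [hb, Real.zero_rpow (by linarith : p ≠ (0:ℝ))] at this
    linarith
  have h2 : |b i| ^ p = 0 := by
    have := Finset.sum_eq_zero_iff_of_nonneg
      (fun j (_ : j ∈ Finset.univ) => Real.rpow_nonneg (abs_nonneg (b j)) p) |>.1 h1 i
      (Finset.mem_univ i)
    exact this
  have := Real.rpow_eq_zero_iff_of_nonneg (abs_nonneg (b i)) |>.1 h2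
  simpa using this.1

lemma bregman_pdiv_ge (a b : Fin d → ℝ) :
    1/2 * (pnorm p a - pnorm p b)^2 ≤ bregman (pdiv p) a b := by
  have hna := pnorm_nonneg (p := p) a
  have hnb := pnorm_nonneg (p := p) b
  rw [bregman_pdiv hp1 hp2, pdiv, pdiv]
  rcases eq_or_lt_of_le hnb with h0 | h0
  · have hz : ∀ i, phi p (b i) = 0 := by
      intro i
      rw [pnorm_eq_zero hp1 hp2 h0.symm i]
      simp [phi]
    rw [← h0]
    simp only [hz, zero_mul, Finset.sum_const_zero, mul_zero]
    nlinarith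
  · set na := pnorm p a
    set nb := pnorm p b
    have hsplit : ∑ i, phi p (b i) * (a i - b i)
        = (∑ i, phi p (b i) * a i) - ∑ i, |b i| ^ p := by
      rw [← Finset.sum_sub_distrib]
      apply Finset.sum_congr rfl
      intro i _
      rw [← phi_mul_self hp1 hp2 (b i)]
      ring
    rw [hsplit, ← pnorm_rpow hp1 b]
    have hT : (∑ i, phi p (b i) * a i) ≤ nb ^ (p-1) * na := holder_phi hp1 hp2 b a
    have hpos : (0:ℝ) ≤ nb ^ (2 - p) := Real.rpow_nonneg hnb _
    have key : nb ^ (2-p) * ((∑ i, phi p (b i) * a i) - nb ^ p)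
        ≤ nb * na - nb ^ (2:ℕ) := by
      have h1 : nb ^ (2-p) * ((∑ i, phi p (b i) * a i) - nb ^ p)
          ≤ nb ^ (2-p) * (nb ^ (p-1) * na - nb ^ p) := by
        apply mul_le_mul_of_nonneg_left _ hpos
        linarith
      have e1 : nb ^ (2-p) * nb ^ (p-1) = nb := by
        rw [← Real.rpow_add h0]
        norm_num
      have e2 : nb ^ (2-p) * nb ^ p = nb ^ (2:ℕ) := by
        rw [← Real.rpow_add h0, ← Real.rpow_natCast nb 2]
        norm_num
      calc nb ^ (2-p) * ((∑ i, phi p (b i) * a i) - nb ^ p)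
          ≤ nb ^ (2-p) * (nb ^ (p-1) * na - nb ^ p) := h1
        _ = nb ^ (2-p) * nb ^ (p-1) * na - nb ^ (2-p) * nb ^ p := by ring
        _ = nb * na - nb ^ (2:ℕ) := by rw [e1, e2]
    nlinarith

omit hp1 hp2 in
lemma rpow_succ_eq {t s : ℝ} (ht : 0 ≤ t) (hs : s + 1 ≠ 0) : t ^ s * t = t ^ (s + 1) := by
  rw [Real.rpow_add' ht hs, Real.rpow_one]

lemma bregman_pdiv_le (wt u : Fin d → ℝ) :
    bregman (pdiv p) wt u ≤ 2 * pnorm p wt ^ (2-p) * pnorm p (wt - u) ^ p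
      + pnorm p (wt - u) ^ (3-p) * (pnorm p wt + pnorm p (wt - u)) ^ (p-1) := by
  set N := pnorm p wt with hN
  set r := pnorm p (wt - u) with hr
  set nu := pnorm p u with hnu
  have hN0 : 0 ≤ N := pnorm_nonneg wt
  have hr0 : 0 ≤ r := pnorm_nonneg (wt - u)
  have hnu0 : 0 ≤ nu := pnorm_nonneg u
  -- step 1 : D ≤ D + D'
  have hD' : 0 ≤ bregman (pdiv p) u wt := by
    have := bregman_pdiv_ge hp1 hp2 u wt
    nlinarith [sq_nonneg (nu - N)]
  -- step 2 : sum of the two bregman divergences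
  have hsum : bregman (pdiv p) wt u + bregman (pdiv p) u wt
      = N ^ (2-p) * ∑ i, phi p (wt i) * (wt i - u i)
        - nu ^ (2-p) * ∑ i, phi p (u i) * (wt i - u i) := by
    rw [bregman_pdiv hp1 hp2, bregman_pdiv hp1 hp2]
    have : ∀ i : Fin d, phi p (wt i) * (u i - wt i) = -(phi p (wt i) * (wt i - u i)) := by
      intro i; ring
    simp_rw [this, Finset.sum_neg_distrib]
    ring
  -- bound for the first sum piece
  have hb1 : ∑ i, (phi p (wt i) - phi p (u i)) * (wt i - u i) ≤ 2 * r ^ p := by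
    have step : ∀ i : Fin d, (phi p (wt i) - phi p (u i)) * (wt i - u i)
        ≤ 2 * |wt i - u i| ^ p := by
      intro i
      calc (phi p (wt i) - phi p (u i)) * (wt i - u i)
          ≤ |(phi p (wt i) - phi p (u i)) * (wt i - u i)| := le_abs_self _
        _ = |phi p (wt i) - phi p (u i)| * |wt i - u i| := abs_mul _ _
        _ ≤ (2 * |wt i - u i| ^ (p-1)) * |wt i - u i| := by
            apply mul_le_mul_of_nonneg_right (abs_phi_sub_le hp1 hp2 _ _) (abs_nonneg _)
        _ = 2 * (|wt i - u i| ^ (p-1) * |wt i - u i|) := by ring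
        _ = 2 * |wt i - u i| ^ p := by
            rw [rpow_succ_eq (abs_nonneg _) (by intro hc; linarith [hc] : p - 1 + 1 ≠ 0),
              show p - 1 + 1 = p by ring]
    calc ∑ i, (phi p (wt i) - phi p (u i)) * (wt i - u i)
        ≤ ∑ i, 2 * |wt i - u i| ^ p := Finset.sum_le_sum fun i _ => step i
      _ = 2 * ∑ i, |(wt - u) i| ^ p := by rw [Finset.mul_sum]; rfl
      _ = 2 * r ^ p := by rw [← pnorm_rpow hp1 (wt - u)]
  -- bound for the second sum piece
  have hb2 : |∑ i, phi p (u i) * (wt i - u i)| ≤ nu ^ (p-1) * r := by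
    rw [abs_le]
    constructor
    · have h := holder_phi hp1 hp2 u (-(wt - u))
      rw [pnorm_neg hp1, ← hr, ← hnu] at h
      have : ∑ i, phi p (u i) * (-(wt - u)) i = -∑ i, phi p (u i) * (wt i - u i) := by
        rw [← Finset.sum_neg_distrib]
        apply Finset.sum_congr rfl
        intro i _
        simp [Pi.neg_apply, Pi.sub_apply]
        ring
      rw [this] at h
      linarith
    · have h := holder_phi hp1 hp2 u (wt - u)
      rw [← hr, ← hnu] at h
      simpa [Pi.sub_apply] using h
  have hb3 : |N ^ (2-p) - nu ^ (2-p)| ≤ r ^ (2-p) := by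
    have h1 : |N - nu| ≤ r := abs_pnorm_sub_pnorm_le hp1 wt u
    calc |N ^ (2-p) - nu ^ (2-p)| ≤ |N - nu| ^ (2-p) :=
          abs_rpow_sub_le hN0 hnu0 (by linarith) (by linarith)
      _ ≤ r ^ (2-p) := Real.rpow_le_rpow (abs_nonneg _) h1 (by linarith)
  have hb4 : nu ^ (p-1) ≤ (N + r) ^ (p-1) := by
    have : nu ≤ N + r := by
      have h := pnorm_add_le hp1 wt (-(wt - u))
      rw [pnorm_neg hp1, ← hr, ← hN] at h
      have he : wt + -(wt - u) = u := by ext i; simp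
      rw [he, ← hnu] at h
      exact h
    exact Real.rpow_le_rpow hnu0 this (by linarith)
  -- assemble
  have key : N ^ (2-p) * ∑ i, phi p (wt i) * (wt i - u i)
        - nu ^ (2-p) * ∑ i, phi p (u i) * (wt i - u i)
      ≤ 2 * N ^ (2-p) * r ^ p + r ^ (3-p) * (N + r) ^ (p-1) := by
    have hsplit : N ^ (2-p) * ∑ i, phi p (wt i) * (wt i - u i)
          - nu ^ (2-p) * ∑ i, phi p (u i) * (wt i - u i)
        = N ^ (2-p) * (∑ i, (phi p (wt i) - phi p (u i)) * (wt i - u i))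
          + (N ^ (2-p) - nu ^ (2-p)) * ∑ i, phi p (u i) * (wt i - u i) := by
      rw [show (∑ i, (phi p (wt i) - phi p (u i)) * (wt i - u i))
          = (∑ i, phi p (wt i) * (wt i - u i)) - ∑ i, phi p (u i) * (wt i - u i) by
        rw [← Finset.sum_sub_distrib]; apply Finset.sum_congr rfl; intro i _; ring]
      ring
    rw [hsplit]
    have hNp : (0:ℝ) ≤ N ^ (2-p) := Real.rpow_nonneg hN0 _
    have t1 : N ^ (2-p) * (∑ i, (phi p (wt i) - phi p (u i)) * (wt i - u i))
        ≤ N ^ (2-p) * (2 * r ^ p) := mul_le_mul_of_nonneg_left hb1 hNp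
    have t2 : (N ^ (2-p) - nu ^ (2-p)) * ∑ i, phi p (u i) * (wt i - u i)
        ≤ r ^ (3-p) * (N + r) ^ (p-1) := by
      calc (N ^ (2-p) - nu ^ (2-p)) * ∑ i, phi p (u i) * (wt i - u i)
          ≤ |(N ^ (2-p) - nu ^ (2-p)) * ∑ i, phi p (u i) * (wt i - u i)| := le_abs_self _
        _ = |N ^ (2-p) - nu ^ (2-p)| * |∑ i, phi p (u i) * (wt i - u i)| := abs_mul _ _
        _ ≤ r ^ (2-p) * (nu ^ (p-1) * r) := by
            apply mul_le_mul hb3 hb2 (abs_nonneg _) (Real.rpow_nonneg hr0 _)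
        _ = (r ^ (2-p) * r) * nu ^ (p-1) := by ring
        _ = r ^ (3-p) * nu ^ (p-1) := by
            rw [rpow_succ_eq hr0 (by intro hc; linarith [hc] : 2 - p + 1 ≠ 0),
              show (2:ℝ) - p + 1 = 3 - p by ring]
        _ ≤ r ^ (3-p) * (N + r) ^ (p-1) :=
            mul_le_mul_of_nonneg_left hb4 (Real.rpow_nonneg hr0 _)
    calc N ^ (2-p) * (∑ i, (phi p (wt i) - phi p (u i)) * (wt i - u i))
          + (N ^ (2-p) - nu ^ (2-p)) * ∑ i, phi p (u i) * (wt i - u i)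
        ≤ N ^ (2-p) * (2 * r ^ p) + r ^ (3-p) * (N + r) ^ (p-1) := add_le_add t1 t2
      _ = 2 * N ^ (2-p) * r ^ p + r ^ (3-p) * (N + r) ^ (p-1) := by ring
  linarith [hsum, hD', key]

lemma taup_gt_one : 1 < taup p := by
  have hm1 : 1 < min p (3-p) := lt_min hp1 (by linarith)
  have hm2 : min p (3-p) < 2 := lt_of_le_of_lt (min_le_left _ _) hp2
  rw [taup, lt_div_iff₀ (by linarith)]
  linarith

lemma taup_le_two : taup p ≤ 2 := by
  have hm1 : 1 < min p (3-p) := lt_min hp1 (by linarith)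
  rw [taup, div_le_iff₀ (by linarith)]
  linarith

lemma Omp_nonneg {D : ℝ} (hD : 0 ≤ D) : 0 ≤ Omp p D := by
  have hτ1 := taup_gt_one hp1 hp2
  rw [Omp]
  split_ifs with h
  · have : 0 < 1 / taup p := by positivity
    linarith
  · have : (0:ℝ) ≤ D ^ taup p := Real.rpow_nonneg hD _
    positivity

lemma Omp_le_self {D : ℝ} (hD : 0 ≤ D) : Omp p D ≤ D := by
  have hτ1 := taup_gt_one hp1 hp2
  have h1τ : 1 / taup p ≤ 1 := by rw [div_le_one (by linarith)]; linarith
  rw [Omp]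
  split_ifs with h
  · linarith
  · push_neg at h
    have hDτ : D ^ taup p ≤ D := by
      rcases eq_or_lt_of_le hD with h0 | h0
      · rw [← h0, Real.zero_rpow (by linarith : taup p ≠ 0)]
      · calc D ^ taup p ≤ D ^ (1:ℝ) :=
            Real.rpow_le_rpow_of_exponent_ge h0 h.le (by linarith)
          _ = D := Real.rpow_one D
    have hτnn : (0:ℝ) ≤ D ^ taup p := Real.rpow_nonneg hD _
    nlinarith

lemma Omp_le_rpow {D : ℝ} (hD0 : 0 ≤ D) (hD1 : D < 1) : Omp p D ≤ D ^ taup p := by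
  have hτ1 := taup_gt_one hp1 hp2
  have h1τ : 1 / taup p ≤ 1 := by rw [div_le_one (by linarith)]; linarith
  rw [Omp, if_neg (by linarith)]
  have hτnn : (0:ℝ) ≤ D ^ taup p := Real.rpow_nonneg hD0 _
  nlinarith

lemma part1 (wt u : Fin d → ℝ) :
    Bp p wt * Omp p (bregman (pdiv p) wt u) ≤ pnorm p (wt - u) ^ 2 := by
  have hτ1 := taup_gt_one hp1 hp2
  have hτ2 := taup_le_two hp1 hp2
  set τ := taup p with hτ
  set m := min p (3 - p) with hm
  have hm1 : 1 < m := lt_min hp1 (by linarith)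
  have hm2 : m < 2 := lt_of_le_of_lt (min_le_left _ _) hp2
  have hτdef : τ = 2 / m := by rw [hτ, taup, hm]
  have hmτ : m * τ = 2 := by rw [hτdef]; field_simp
  set N := pnorm p wt with hN
  set r := pnorm p (wt - u) with hr
  set D := bregman (pdiv p) wt u with hD
  have hN0 : 0 ≤ N := pnorm_nonneg wt
  have hr0 : 0 ≤ r := pnorm_nonneg (wt - u)
  have hD0 : 0 ≤ D := by
    have := bregman_pdiv_ge hp1 hp2 wt u
    nlinarith [sq_nonneg (pnorm p wt - pnorm p u)]
  set A := 2 * (2 * N) ^ (2 - p) + 2 * N ^ (p - 1) + 2 with hA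
  have hA2 : 2 ≤ A := by
    have h1 : (0:ℝ) ≤ (2 * N) ^ (2 - p) := Real.rpow_nonneg (by linarith) _
    have h2 : (0:ℝ) ≤ N ^ (p - 1) := Real.rpow_nonneg hN0 _
    rw [hA]; linarith
  have hApos : (0:ℝ) < A := by linarith
  have hcoef : 2 * N ^ (2 - p) + N ^ (p - 1) + 1 ≤ A := by
    have h1 : N ^ (2 - p) ≤ (2 * N) ^ (2 - p) :=
      Real.rpow_le_rpow hN0 (by linarith) (by linarith)
    have h2 : (0:ℝ) ≤ N ^ (p - 1) := Real.rpow_nonneg hN0 _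
    rw [hA]; linarith
  have hBp : Bp p wt = min (A ^ (-1:ℝ)) (A ^ (-τ)) := by rw [Bp, ← hN, ← hA, ← hτ]
  have hBp0 : 0 < Bp p wt := by
    rw [hBp]
    exact lt_min (Real.rpow_pos_of_pos hApos _) (Real.rpow_pos_of_pos hApos _)
  have hBp1 : Bp p wt ≤ A ^ (-1:ℝ) := hBp ▸ min_le_left _ _
  have hBp2 : Bp p wt ≤ A ^ (-τ) := hBp ▸ min_le_right _ _
  have hDub := bregman_pdiv_le hp1 hp2 wt u
  rw [← hN, ← hr, ← hD] at hDub
  have hOmnn : 0 ≤ Omp p D := Omp_nonneg hp1 hp2 hD0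
  have hOmD : Omp p D ≤ D := Omp_le_self hp1 hp2 hD0
  rcases eq_or_lt_of_le hr0 with hrz | hrpos
  · -- r = 0
    have hrp : r ^ p = 0 := by rw [← hrz, Real.zero_rpow (by linarith : p ≠ (0:ℝ))]
    have hr3p : r ^ (3-p) = 0 := by rw [← hrz, Real.zero_rpow (by linarith : 3 - p ≠ (0:ℝ))]
    have hDz : D = 0 := by
      rw [hrp, hr3p] at hDub
      simp at hDub
      linarith
    have hOmz : Omp p D = 0 := by
      rw [hDz, Omp, if_neg (by norm_num), Real.zero_rpow (by linarith : τ ≠ 0), mul_zero]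
    rw [hOmz, mul_zero, ← hrz]
    positivity
  · -- 0 < r
    have hNp2 : (0:ℝ) ≤ N ^ (2-p) := Real.rpow_nonneg hN0 _
    rcases le_or_gt r 1 with hr1 | hr1
    · -- r ≤ 1
      have hkey : D ≤ A * r ^ m := by
        have e1 : r ^ p ≤ r ^ m :=
          Real.rpow_le_rpow_of_exponent_ge hrpos hr1 (min_le_left _ _)
        have e2 : r ^ (3-p) ≤ r ^ m :=
          Real.rpow_le_rpow_of_exponent_ge hrpos hr1 (min_le_right _ _)
        have e3 : (N + r) ^ (p-1) ≤ N ^ (p-1) + 1 := by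
          calc (N + r) ^ (p-1) ≤ (N + 1) ^ (p-1) :=
                Real.rpow_le_rpow (by linarith) (by linarith) (by linarith)
            _ ≤ N ^ (p-1) + (1:ℝ) ^ (p-1) :=
                rpow_add_le_real hN0 zero_le_one (by linarith) (by linarith)
            _ = N ^ (p-1) + 1 := by rw [Real.one_rpow]
        have hrm0 : (0:ℝ) ≤ r ^ m := Real.rpow_nonneg hr0 _
        have t1 : 2 * N ^ (2-p) * r ^ p ≤ 2 * N ^ (2-p) * r ^ m := by
          apply mul_le_mul_of_nonneg_left e1 (by linarith)
        have t2 : r ^ (3-p) * (N + r) ^ (p-1) ≤ r ^ m * (N ^ (p-1) + 1) := by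
          apply mul_le_mul e2 e3 (Real.rpow_nonneg (by linarith : (0:ℝ) ≤ N + r) _) hrm0
        have t3 : (2 * N ^ (2-p) + N ^ (p-1) + 1) * r ^ m ≤ A * r ^ m :=
          mul_le_mul_of_nonneg_right hcoef hrm0
        nlinarith
      rcases le_or_gt 1 D with hD1 | hD1
      · -- 1 ≤ D
        have hrm0 : (0:ℝ) < r ^ m := Real.rpow_pos_of_pos hrpos _
        have hAτnn : (0:ℝ) ≤ A ^ (-τ) := (Real.rpow_pos_of_pos hApos _).le
        have c1 : Bp p wt * Omp p D ≤ A ^ (-τ) * Omp p D :=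
          mul_le_mul_of_nonneg_right hBp2 hOmnn
        have c2 : A ^ (-τ) * Omp p D ≤ A ^ (-τ) * D :=
          mul_le_mul_of_nonneg_left hOmD hAτnn
        have c3 : A ^ (-τ) * D ≤ A ^ (-τ) * (A * r ^ m) :=
          mul_le_mul_of_nonneg_left hkey hAτnn
        have c4 : A ^ (-τ) * (A * r ^ m) = A ^ (1-τ) * r ^ m := by
          rw [show (1:ℝ) - τ = -τ + 1 by ring, Real.rpow_add hApos, Real.rpow_one]
          ring
        have ht : A⁻¹ ≤ r ^ m := by
          have h1 : 1 ≤ A * r ^ m := le_trans hD1 hkey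
          rw [inv_eq_one_div, div_le_iff₀ hApos]
          linarith [mul_comm A (r ^ m)]
        have c5 : A ^ (1-τ) * r ^ m ≤ r ^ 2 := by
          have hr2 : (r:ℝ) ^ (2:ℕ) = (r ^ m) ^ τ := by
            rw [← Real.rpow_natCast r 2,
              show ((2:ℕ):ℝ) = m * τ by push_cast; linarith,
              Real.rpow_mul hr0]
          have e : (r ^ m) ^ τ = (r ^ m) ^ (τ-1) * r ^ m := by
            rw [show τ = (τ-1) + 1 by ring, Real.rpow_add hrm0, Real.rpow_one]
            ring_nf
          have hmono : A ^ (1-τ) ≤ (r ^ m) ^ (τ-1) := by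
            have h1 : (A⁻¹) ^ (τ-1) ≤ (r ^ m) ^ (τ-1) :=
              Real.rpow_le_rpow (inv_nonneg.2 hApos.le) ht (by linarith)
            have h2 : (A⁻¹) ^ (τ-1) = A ^ (1-τ) := by
              rw [← Real.rpow_neg_one A, ← Real.rpow_mul hApos.le]
              norm_num
            linarith [h2 ▸ h1]
          calc A ^ (1-τ) * r ^ m ≤ (r ^ m) ^ (τ-1) * r ^ m :=
                mul_le_mul_of_nonneg_right hmono hrm0.le
            _ = (r ^ m) ^ τ := e.symm
            _ = r ^ 2 := hr2.symm
        linarith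
      · -- D < 1
        have hOmτ : Omp p D ≤ D ^ τ := Omp_le_rpow hp1 hp2 hD0 hD1
        have hAτnn : (0:ℝ) ≤ A ^ (-τ) := (Real.rpow_pos_of_pos hApos _).le
        have c1 : Bp p wt * Omp p D ≤ A ^ (-τ) * Omp p D :=
          mul_le_mul_of_nonneg_right hBp2 hOmnn
        have c2 : A ^ (-τ) * Omp p D ≤ A ^ (-τ) * D ^ τ :=
          mul_le_mul_of_nonneg_left hOmτ hAτnn
        have c3 : D ^ τ ≤ (A * r ^ m) ^ τ := Real.rpow_le_rpow hD0 hkey (by linarith)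
        have c4 : (A * r ^ m) ^ τ = A ^ τ * r ^ 2 := by
          rw [Real.mul_rpow hApos.le (Real.rpow_nonneg hr0 _), ← Real.rpow_mul hr0,
            show m * τ = ((2:ℕ):ℝ) by push_cast; linarith, Real.rpow_natCast]
        have c5 : A ^ (-τ) * (A ^ τ * r ^ 2) = r ^ 2 := by
          rw [← mul_assoc, ← Real.rpow_add hApos]
          norm_num
        have c6 : A ^ (-τ) * D ^ τ ≤ A ^ (-τ) * (A ^ τ * r ^ 2) := by
          apply mul_le_mul_of_nonneg_left _ hAτnn
          rw [← c4]; exact c3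
        linarith
    · -- 1 < r
      have hkey : D ≤ A * r ^ 2 := by
        have hR : (r:ℝ) ^ (2:ℕ) = r ^ ((2:ℕ):ℝ) := (Real.rpow_natCast r 2).symm
        have e1 : r ^ p ≤ r ^ ((2:ℕ):ℝ) :=
          Real.rpow_le_rpow_of_exponent_le hr1.le (by push_cast; linarith)
        have e2 : r ^ (3-p) ≤ r ^ ((2:ℕ):ℝ) :=
          Real.rpow_le_rpow_of_exponent_le hr1.le (by push_cast; linarith)
        have e3 : (N + r) ^ (p-1) ≤ N ^ (p-1) + r ^ (p-1) :=
          rpow_add_le_real hN0 hr0 (by linarith) (by linarith)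
        have e4 : r ^ (3-p) * r ^ (p-1) = r ^ ((2:ℕ):ℝ) := by
          rw [← Real.rpow_add hrpos]
          norm_num
        have e5 : r ^ (3-p) * (N + r) ^ (p-1)
            ≤ N ^ (p-1) * r ^ ((2:ℕ):ℝ) + r ^ ((2:ℕ):ℝ) := by
          have h3p : (0:ℝ) ≤ r ^ (3-p) := Real.rpow_nonneg hr0 _
          have hb : r ^ (3-p) * (N + r) ^ (p-1)
              ≤ r ^ (3-p) * (N ^ (p-1) + r ^ (p-1)) :=
            mul_le_mul_of_nonneg_left e3 h3p
          have hNp1 : (0:ℝ) ≤ N ^ (p-1) := Real.rpow_nonneg hN0 _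
          have hc : r ^ (3-p) * N ^ (p-1) ≤ r ^ ((2:ℕ):ℝ) * N ^ (p-1) :=
            mul_le_mul_of_nonneg_right e2 hNp1
          linarith [e4, hb, hc]
        have t1 : 2 * N ^ (2-p) * r ^ p ≤ 2 * N ^ (2-p) * r ^ ((2:ℕ):ℝ) :=
          mul_le_mul_of_nonneg_left e1 (by linarith)
        have hr2nn : (0:ℝ) ≤ r ^ ((2:ℕ):ℝ) := Real.rpow_nonneg hr0 _
        have t3 : (2 * N ^ (2-p) + N ^ (p-1) + 1) * r ^ ((2:ℕ):ℝ) ≤ A * r ^ ((2:ℕ):ℝ) :=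
          mul_le_mul_of_nonneg_right hcoef hr2nn
        rw [hR]
        linarith [t1, e5, t3, hDub]
      have hAinv : Bp p wt ≤ A⁻¹ := by
        rw [Real.rpow_neg_one] at hBp1
        exact hBp1
      have hAinvnn : (0:ℝ) ≤ A⁻¹ := inv_nonneg.2 hApos.le
      have c1 : Bp p wt * Omp p D ≤ A⁻¹ * Omp p D :=
        mul_le_mul_of_nonneg_right hAinv hOmnn
      have c2 : A⁻¹ * Omp p D ≤ A⁻¹ * D := mul_le_mul_of_nonneg_left hOmD hAinvnn
      have c3 : A⁻¹ * D ≤ A⁻¹ * (A * r ^ 2) := mul_le_mul_of_nonneg_left hkey hAinvnn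
      have c4 : A⁻¹ * (A * r ^ 2) = r ^ 2 := by
        rw [← mul_assoc, inv_mul_cancel₀ (ne_of_gt hApos), one_mul]
      linarith

end ineq


theorem pdiv_convexity_control
    {d : ℕ} (p : ℝ) (hp1 : 1 < p) (hp2 : p < 2) :
    (∀ wt u : Fin d → ℝ,
        Bp p wt * Omp p (bregman (pdiv p) wt u) ≤ pnorm p (wt - u) ^ 2) ∧
      ∀ (F : (Fin d → ℝ) → ℝ) (σF : ℝ) (wstar : Fin d → ℝ),
        0 < σF → Differentiable ℝ F →
        (∀ a b, σF / 2 * pnorm p (a - b) ^ 2 ≤ bregman F a b) →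
        (∀ u, F wstar ≤ F u) →
        ∀ u : Fin d → ℝ,
          σF * Bp p wstar * Omp p (bregman (pdiv p) wstar u) ≤
            (fderiv ℝ F wstar - fderiv ℝ F u) (wstar - u) := by
  constructor
  · exact fun wt u => part1 hp1 hp2 wt u
  · intro F σF wstar hσ _hdiff hsc _hmin u
    have h1 := part1 hp1 hp2 wstar u
    have hb1 := hsc wstar u
    have hb2 := hsc u wstar
    have hrsym : pnorm p (u - wstar) = pnorm p (wstar - u) := by
      rw [show u - wstar = -(wstar - u) by ring, pnorm_neg hp1]
    rw [hrsym] at hb2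
    have hiden : (fderiv ℝ F wstar - fderiv ℝ F u) (wstar - u)
        = bregman F wstar u + bregman F u wstar := by
      rw [bregman, bregman, ContinuousLinearMap.sub_apply,
        show u - wstar = -(wstar - u) by ring, map_neg]
      ring
    have h2 : σF * (Bp p wstar * Omp p (bregman (pdiv p) wstar u))
        ≤ σF * pnorm p (wstar - u) ^ 2 := mul_le_mul_of_nonneg_left h1 hσ.le
    rw [hiden]
    nlinarith
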